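/- arXiv:2105.13874 — 2 statements merged into one kernel-verified Lean document; each statement's English description precedes it below -/
import Mathlib

section
/- Let A ⊆ H be an affine commutative-by-finite Hopf algebra with A semiprime or central in H, or H pointed. Then the map π° : H̄* → H°, β ↦ β∘π, is an injective Hopf algebra homomorphism whose image equals {f ∈ H° : f(A⁺H) = 0} = {f ∈ H° : f(ah) = ε(a)f(h) = f(ha) for all a ∈ A, h ∈ H}, and this image (identified with H̄*) is a normal Hopf subalgebra of H°, i.e. it is stable under both the left and right adjoint actions of H°. -/
open TensorProduct LinearMap Coalgebra

namespace Paper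

noncomputable section

variable (k : Type) [Field k]

section Coalg

variable {C : Type} [AddCommMonoid C] [Module k C] [Coalgebra k C]

/-- Convolution product on the linear dual of a coalgebra. -/
noncomputable def conv (f g : Module.Dual k C) : Module.Dual k C :=
  (TensorProduct.lid k k).toLinearMap ∘ₗ TensorProduct.map f g ∘ₗ Coalgebra.comul

/-- The unit of the convolution algebra on the dual: the counit. -/
noncomputable def convOne : Module.Dual k C := Coalgebra.counit

/-- Iterated convolution power. -/
noncomputable def convPow (f : Module.Dual k C) : ℕ → Module.Dual k C
  | 0 => convOne k
  | n + 1 => conv k f (convPow f n)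

end Coalg

/-- The finite dual of an algebra: functionals vanishing on a two-sided ideal
of finite codimension. -/
def finDual (H : Type) [Ring H] [Algebra k H] : Set (Module.Dual k H) :=
  {f | ∃ I : Submodule k H, (∀ (h : H), ∀ x ∈ I, h * x ∈ I ∧ x * h ∈ I) ∧
    I ≤ LinearMap.ker f ∧ FiniteDimensional k (H ⧸ I)}

section Hopf

variable (H : Type) [Ring H] [HopfAlgebra k H]

/-- Left adjoint action `(ad_ℓ h)(a) = Σ h₁ a S(h₂)`. -/
noncomputable def adl (h a : H) : H :=
  TensorProduct.lift (((LinearMap.mul k H).comp (LinearMap.mulRight k a)).compl₂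
    (HopfAlgebra.antipode (R := k))) (Coalgebra.comul h)

/-- Right adjoint action `(ad_r h)(a) = Σ S(h₁) a h₂`. -/
noncomputable def adr (h a : H) : H :=
  TensorProduct.lift ((LinearMap.mul k H).comp ((LinearMap.mulRight k a) ∘ₗ
    (HopfAlgebra.antipode (R := k)))) (Coalgebra.comul h)

/-- Left adjoint action on the dual: `(ad_ℓ φ)(f) = Σ φ₁ f S°(φ₂)`, i.e.
`h ↦ Σ φ(h₁ S(h₃)) f(h₂)`. -/
noncomputable def adld (φ f : Module.Dual k H) : Module.Dual k H :=
  (TensorProduct.lid k k).toLinearMap ∘ₗ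
    TensorProduct.map (φ ∘ₗ LinearMap.mul' k H ∘ₗ
      (HopfAlgebra.antipode (R := k)).lTensor H) f ∘ₗ
    (TensorProduct.assoc k H H H).symm.toLinearMap ∘ₗ
    ((TensorProduct.comm k H H).toLinearMap.lTensor H) ∘ₗ
    ((Coalgebra.comul (R := k) (A := H)).lTensor H) ∘ₗ
    Coalgebra.comul

/-- Right adjoint action on the dual: `(ad_r φ)(f) = Σ S°(φ₁) f φ₂`, i.e.
`h ↦ Σ φ(S(h₁) h₃) f(h₂)`. -/
noncomputable def adrd (φ f : Module.Dual k H) : Module.Dual k H :=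
  (TensorProduct.lid k k).toLinearMap ∘ₗ
    TensorProduct.map (φ ∘ₗ LinearMap.mul' k H ∘ₗ
      (HopfAlgebra.antipode (R := k)).rTensor H) f ∘ₗ
    (TensorProduct.assoc k H H H).symm.toLinearMap ∘ₗ
    ((TensorProduct.comm k H H).toLinearMap.lTensor H) ∘ₗ
    ((Coalgebra.comul (R := k) (A := H)).lTensor H) ∘ₗ
    Coalgebra.comul

/-- A submodule is a subcoalgebra if its image under `comul` lies in `V ⊗ V`. -/
def IsSubcoalgebra (V : Submodule k H) : Prop :=
  ∀ x ∈ V, Coalgebra.comul (R := k) x ∈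
    LinearMap.range (TensorProduct.map V.subtype V.subtype)

/-- A Hopf algebra is pointed if every simple subcoalgebra is one-dimensional. -/
def IsPointedHopf : Prop :=
  ∀ V : Submodule k H, IsSubcoalgebra k H V → V ≠ ⊥ →
    (∀ W : Submodule k H, W ≤ V → IsSubcoalgebra k H W → W = ⊥ ∨ W = V) →
    Module.finrank k ↥V = 1

/-- A coideal: `ε(X) = 0` and `Δ(X) ⊆ X ⊗ H + H ⊗ X`. -/
def IsCoideal (X : Submodule k H) : Prop :=
  (∀ x ∈ X, Coalgebra.counit (R := k) x = 0) ∧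
  (∀ x ∈ X, Coalgebra.comul (R := k) x ∈
    LinearMap.range (TensorProduct.map X.subtype (LinearMap.id (M := H))) ⊔
    LinearMap.range (TensorProduct.map (LinearMap.id (M := H)) X.subtype))

/-- `S` is a Hopf subalgebra of the finite dual `H°` (with its convolution
product; closure under the coproduct is expressed in pairing form). -/
def IsHopfSubalgSet (S : Set (Module.Dual k H)) : Prop :=
  S ⊆ finDual k H ∧ convOne k ∈ S ∧
  (∀ f g, f ∈ S → g ∈ S → f + g ∈ S ∧ conv k f g ∈ S) ∧
  (∀ (c : k), ∀ f ∈ S, c • f ∈ S) ∧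
  (∀ f ∈ S, f ∘ₗ HopfAlgebra.antipode (R := k) ∈ S) ∧
  (∀ f ∈ S, ∃ (n : ℕ) (s t : Fin n → Module.Dual k H),
    (∀ i, s i ∈ S ∧ t i ∈ S) ∧ ∀ x y : H, f (x * y) = ∑ i, s i x * t i y)

end Hopf

section Ext

variable (A : Type) [CommRing A] [HopfAlgebra k A]
variable (H : Type) [Ring H] [HopfAlgebra k H]

/-- The submodule `A⁺H` of `H` (image of the augmentation ideal times `H`). -/
def augHIdeal (ι : A →ₗ[k] H) : Submodule k H :=
  Submodule.span k
    {x : H | ∃ (a : A) (h : H), Coalgebra.counit (R := k) a = 0 ∧ x = ι a * h}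

/-- The subset of the dual of `H` corresponding to `H̄* = (H/A⁺H)*`:
functionals vanishing on `A⁺H`. -/
def hbarStar (ι : A →ₗ[k] H) : Set (Module.Dual k H) :=
  {f | ∀ x ∈ augHIdeal k A H ι, f x = 0}

/-- The tangential component `W(H°)`. -/
def tangential (ι : A →ₗ[k] H) : Set (Module.Dual k H) :=
  {f | f ∈ finDual k H ∧ ∃ n : ℕ, 0 < n ∧ ∀ x ∈ (augHIdeal k A H ι) ^ n, f x = 0}

/-- The augmentation ideal of the commutative Hopf algebra `A`. -/
def augIdeal : Ideal A := RingHom.ker (Bialgebra.counitAlgHom k A)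

/-- The irreducible component `A'` of `A°` containing the counit:
functionals vanishing on a power of the augmentation ideal. -/
def Aprime : Set (Module.Dual k A) :=
  {f | ∃ n : ℕ, 0 < n ∧ ∀ x ∈ (augIdeal k A) ^ n, f x = 0}

/-- The Lie algebra `𝔤` of `G_H`: primitive functionals on `A`. -/
def gLie : Set (Module.Dual k A) :=
  {f | f 1 = 0 ∧ ∀ x y : A, f (x * y) =
    f x * Coalgebra.counit (R := k) y + Coalgebra.counit (R := k) x * f y}

/-- An ideal of `A` is `H̄`-stable if it is stable under the (left) adjoint
action of `H` on `A` (which factors through `H̄`). -/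
def IsHStable (ι : A →ₗ[k] H) (I : Ideal A) : Prop :=
  ∀ (h : H), ∀ a ∈ I, ∃ b ∈ I, ι b = adl k H h (ι a)

/-- `mc` is the `H̄`-core of `m`: the largest `H̄`-stable ideal of `A`
contained in `m`. -/
def IsCore (ι : A →ₗ[k] H) (m mc : Ideal A) : Prop :=
  IsHStable k A H ι mc ∧ mc ≤ m ∧
    ∀ I : Ideal A, IsHStable k A H ι I → I ≤ m → I ≤ mc

/-- The submodule `H·J` of `H`, for an ideal `J` of `A`. -/
def leftMul (ι : A →ₗ[k] H) (J : Ideal A) : Submodule k H :=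
  Submodule.span k {x : H | ∃ (h : H), ∃ a ∈ J, x = h * ι a}

/-- The submodule `J·H` of `H`, for an ideal `J` of `A`. -/
def rightMul (ι : A →ₗ[k] H) (J : Ideal A) : Submodule k H :=
  Submodule.span k {x : H | ∃ (h : H), ∃ a ∈ J, x = ι a * h}

/-- The subcoalgebra `ĝ := (H/H m_g^{(H̄)})*` of `H°`, as a submodule of the dual. -/
def ghat (ι : A →ₗ[k] H) (core : Ideal A → Ideal A) (g : A →ₐ[k] k) :
    Submodule k (Module.Dual k H) :=
  (leftMul k A H ι (core (RingHom.ker g))).dualAnnihilator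

/-- The character component `k̂G_H` of `H°`. -/
def charComp (ι : A →ₗ[k] H) (core : Ideal A → Ideal A) :
    Set (Module.Dual k H) :=
  {f | ∃ s : Finset (A →ₐ[k] k), s.Nonempty ∧
    ∀ x ∈ ⨅ g ∈ s, leftMul k A H ι (core (RingHom.ker g)), f x = 0}

/-- Hypothesis (OrbSemi): all orbit algebras `A/m^{(H̄)}` are semisimple. -/
def OrbSemi (core : Ideal A → Ideal A) : Prop :=
  ∀ m : Ideal A, m.IsMaximal → IsSemisimpleRing (A ⧸ core m)

/-- Restriction of functionals along `ι` : the map `ι° : H° → A°`. -/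
def iotaDual (ι : A →ₗ[k] H) (f : Module.Dual k H) : Module.Dual k A := f ∘ₗ ι

/-- Coextension of functionals along the projection `Π : H → A`:
the map `Π° : A° → H°`. -/
def PiDual (p : H →ₗ[k] A) (α : Module.Dual k A) : Module.Dual k H := α ∘ₗ p

/-- `A ⊆ H` is an affine commutative-by-finite Hopf algebra, where the
inclusion of the commutative normal Hopf subalgebra `A` is recorded by the
injective Hopf algebra map `ι`. -/
structure CommByFinite (ι : A →ₗ[k] H) : Prop where
  ι_inj : Function.Injective ι
  ι_one : ι 1 = 1
  ι_mul : ∀ a b : A, ι (a * b) = ι a * ι b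
  ι_comul : ∀ a : A,
    Coalgebra.comul (R := k) (ι a) = TensorProduct.map ι ι (Coalgebra.comul a)
  ι_counit : ∀ a : A,
    Coalgebra.counit (R := k) (ι a) = Coalgebra.counit (R := k) a
  ι_antipode : ∀ a : A,
    ι (HopfAlgebra.antipode (R := k) a) = HopfAlgebra.antipode (R := k) (ι a)
  affine : ∃ s : Finset A, Algebra.adjoin k (s : Set A) = ⊤
  normal_left : ∀ (h : H) (a : A), adl k H h (ι a) ∈ Set.range ι
  normal_right : ∀ (h : H) (a : A), adr k H h (ι a) ∈ Set.range ι
  finiteOver : ∃ s : Finset H,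
    Submodule.span k {x : H | ∃ (a : A), ∃ y ∈ s, x = ι a * y} = ⊤

/-- The standing hypothesis: `A` is semiprime (reduced) or central in `H`,
or `H` is pointed. -/
def StandingHyp (ι : A →ₗ[k] H) : Prop :=
  IsReduced A ∨ (∀ (a : A) (h : H), ι a * h = h * ι a) ∨ IsPointedHopf k H

/-- `Π : H → A` is the projection of a direct sum decomposition
`H = A ⊕ X` of right `A`-modules. -/
structure IsSplitting (ι : A →ₗ[k] H) (p : H →ₗ[k] A) : Prop where
  left_inv : ∀ a : A, p (ι a) = a
  right_linear : ∀ (h : H) (a : A), p (h * ι a) = p h * a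

/-- Hypothesis (CoSplit) for a given splitting `Π`: the complement
`X = ker Π` is a coideal of `H`. -/
def CoSplit (p : H →ₗ[k] A) : Prop := IsCoideal k H (LinearMap.ker p)

end Ext

section Quot

variable (A : Type) [CommRing A] [HopfAlgebra k A]
variable (H : Type) [Ring H] [HopfAlgebra k H]
variable (Hb : Type) [Ring Hb] [HopfAlgebra k Hb]

/-- `π : H → H̄` realises `H̄` as the quotient Hopf algebra `H/A⁺H`. -/
structure IsHbarQuotient (ι : A →ₗ[k] H) (π : H →ₗ[k] Hb) : Prop where
  π_surj : Function.Surjective π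
  π_one : π 1 = 1
  π_mul : ∀ x y : H, π (x * y) = π x * π y
  π_comul : ∀ x : H,
    Coalgebra.comul (R := k) (π x) = TensorProduct.map π π (Coalgebra.comul x)
  π_counit : ∀ x : H,
    Coalgebra.counit (R := k) (π x) = Coalgebra.counit (R := k) x
  π_antipode : ∀ x : H,
    π (HopfAlgebra.antipode (R := k) x) = HopfAlgebra.antipode (R := k) (π x)
  π_ker : LinearMap.ker π = augHIdeal k A H ι
  findim : FiniteDimensional k Hb

/-- Composition with `π` : the map `π° : H̄* → H°`. -/
def piDual (π : H →ₗ[k] Hb) (β : Module.Dual k Hb) : Module.Dual k H := β ∘ₗ π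

end Quot

end

end Paper


/-!
`π` is a surjective Hopf map with kernel `A⁺H`, so `β ↦ β ∘ π` is injective, respects all the
structure, and its image is the annihilator of `A⁺H` (which lies in `H°` since `H̄` is finite
dimensional). Normality of `A` gives `A⁺H = HA⁺`, by writing
`h a = Σ (h₁ a S h₂) h₃` and `a h = Σ h₁ (S h₂ a h₃)`; hence a functional kills `A⁺H` iff it is
left `A`-invariant iff it is right `A`-invariant. The coadjoint action
`h ↦ Σ φ(h₁ S h₃) f(h₂)` preserves right invariance: for `h = y b` the middle leg of `b` is
absorbed by `f` as `ε(b₂)`, and the outer legs collapse to `b₁ S b₂ = ε(b)`; the right coadjoint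
action is the mirror image.
-/

open Coalgebra HopfAlgebra TensorProduct

namespace Paper

variable {k : Type} [Field k]

local notation "ε" => Coalgebra.counit (R := k)

section HopfIdentities

variable {H : Type} [Ring H] [HopfAlgebra k H] {κ : Type*}

lemma adl_eq_sum (h c : H) (𝓡 : Repr k h κ) :
    adl k H h c = ∑ i ∈ 𝓡.index, 𝓡.left i * c * antipode k (𝓡.right i) := by
  simp [adl, ← 𝓡.eq, map_sum]

lemma adr_eq_sum (h c : H) (𝓡 : Repr k h κ) :
    adr k H h c = ∑ i ∈ 𝓡.index, antipode k (𝓡.left i) * c * 𝓡.right i := by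
  simp [adr, ← 𝓡.eq, map_sum]

lemma sum_counit_right_smul (h : H) (𝓡 : Repr k h κ) :
    ∑ i ∈ 𝓡.index, ε (𝓡.right i) • 𝓡.left i = h := by
  have := congr(TensorProduct.rid k H $(sum_tmul_counit_eq 𝓡))
  simpa only [map_sum, TensorProduct.rid_tmul, one_smul] using this

lemma sum_adl_mul (h c : H) (𝓡 : Repr k h κ) :
    ∑ i ∈ 𝓡.index, adl k H (𝓡.left i) c * 𝓡.right i = h * c := by
  have := congr((mul' k H ∘ₗ TensorProduct.map (mulRight k c) (mul' k H ∘ₗ (antipode k).rTensor H))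
    $(sum_tmul_tmul_eq 𝓡 (fun i => ℛ k (𝓡.left i)) (fun i => ℛ k (𝓡.right i))))
  simp only [map_sum, LinearMap.comp_apply, TensorProduct.map_tmul, LinearMap.rTensor_tmul,
    LinearMap.mul'_apply, LinearMap.mulRight_apply] at this
  simp only [adl_eq_sum _ c (ℛ k _), Finset.sum_mul]
  simp only [mul_assoc] at this ⊢
  rw [this]
  simp only [← Finset.mul_sum, sum_antipode_mul_eq_smul, mul_smul_comm, mul_one, ← smul_mul_assoc,
    ← Finset.sum_mul, sum_counit_right_smul]

lemma sum_mul_adr (h c : H) (𝓡 : Repr k h κ) :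
    ∑ i ∈ 𝓡.index, 𝓡.left i * adr k H (𝓡.right i) c = c * h := by
  have := congr((mul' k H ∘ₗ (mul' k H ∘ₗ (mulRight k c ∘ₗ antipode k).rTensor H).lTensor H)
    $(sum_tmul_tmul_eq 𝓡 (fun i => ℛ k (𝓡.left i)) (fun i => ℛ k (𝓡.right i))))
  simp only [map_sum, LinearMap.comp_apply, LinearMap.lTensor_tmul, LinearMap.rTensor_tmul,
    LinearMap.mul'_apply, LinearMap.mulRight_apply] at this
  simp only [adr_eq_sum _ c (ℛ k _), Finset.mul_sum]
  simp only [← mul_assoc] at this ⊢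
  rw [← this]
  simp only [← Finset.sum_mul, sum_mul_antipode_eq_smul, smul_mul_assoc, one_mul,
    ← Finset.mul_sum, ← mul_smul_comm, sum_counit_smul]

lemma sum_counit_mul_counit (h : H) (𝓡 : Repr k h κ) :
    ∑ i ∈ 𝓡.index, ε (𝓡.left i) * ε (𝓡.right i) = ε h := by
  simpa [map_sum] using congr(counit (R := k) $(sum_counit_smul 𝓡))

lemma counit_adl (h c : H) : ε (adl k H h c) = ε h * ε c := by
  simp only [adl_eq_sum h c (ℛ k h), map_sum, Bialgebra.counit_mul, counit_antipode]
  rw [← sum_counit_mul_counit h (ℛ k h), Finset.sum_mul]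
  exact Finset.sum_congr rfl fun _ _ => by ring

lemma counit_adr (h c : H) : ε (adr k H h c) = ε h * ε c := by
  simp only [adr_eq_sum h c (ℛ k h), map_sum, Bialgebra.counit_mul, counit_antipode]
  rw [← sum_counit_mul_counit h (ℛ k h), Finset.sum_mul]
  exact Finset.sum_congr rfl fun _ _ => by ring

end HopfIdentities

lemma vanishes_on_ker_counit_iff {A : Type} [Ring A] [Bialgebra k A] (g : A →ₗ[k] k) :
    (∀ a, ε a = 0 → g a = 0) ↔ ∀ a, g a = ε a * g 1 := by
  refine ⟨fun hg a => ?_, fun hg a ha => by rw [hg, ha, zero_mul]⟩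
  have : ε (a - ε a • 1) = 0 := by simp
  simpa [sub_eq_zero] using hg _ this

section Augmentation

variable {A : Type} [CommRing A] [HopfAlgebra k A] {H : Type} [Ring H] [HopfAlgebra k H]
  {ι : A →ₗ[k] H}

lemma mul_iota_mem_augHIdeal (hε : ∀ a, ε (ι a) = ε a)
    (hnormal : ∀ (h : H) (a : A), adl k H h (ι a) ∈ Set.range ι) {a : A} (ha : ε a = 0) (h : H) :
    h * ι a ∈ augHIdeal k A H ι := by
  rw [← sum_adl_mul h (ι a) (ℛ k h)]
  refine Submodule.sum_mem _ fun i _ => ?_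
  obtain ⟨b, hb⟩ := hnormal ((ℛ k h).left i) a
  have hb0 : ε b = 0 := by rw [← hε, hb, counit_adl, hε, ha, mul_zero]
  rw [← hb]
  exact Submodule.subset_span ⟨b, _, hb0, rfl⟩

lemma iota_mul_mem_span_mul_iota (hε : ∀ a, ε (ι a) = ε a)
    (hnormal : ∀ (h : H) (a : A), adr k H h (ι a) ∈ Set.range ι) {a : A} (ha : ε a = 0) (h : H) :
    ι a * h ∈ Submodule.span k {x | ∃ (y : H) (b : A), ε b = 0 ∧ x = y * ι b} := by
  rw [← sum_mul_adr h (ι a) (ℛ k h)]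
  refine Submodule.sum_mem _ fun i _ => ?_
  obtain ⟨b, hb⟩ := hnormal ((ℛ k h).right i) a
  have hb0 : ε b = 0 := by rw [← hε, hb, counit_adr, hε, ha, mul_zero]
  rw [← hb]
  exact Submodule.subset_span ⟨_, b, hb0, rfl⟩

lemma augHIdeal_eq_span_mul_iota (hC : CommByFinite k A H ι) :
    augHIdeal k A H ι = Submodule.span k {x | ∃ (y : H) (b : A), ε b = 0 ∧ x = y * ι b} := by
  apply le_antisymm <;> rw [augHIdeal, Submodule.span_le]
  · rintro _ ⟨a, h, ha, rfl⟩
    exact iota_mul_mem_span_mul_iota hC.ι_counit hC.normal_right ha h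
  · rintro _ ⟨h, b, hb, rfl⟩
    exact mul_iota_mem_augHIdeal hC.ι_counit hC.normal_left hb h

lemma mem_hbarStar_iff_iota_mul (hι : ι 1 = 1) (f : Module.Dual k H) :
    f ∈ hbarStar k A H ι ↔ ∀ (a : A) (h : H), f (ι a * h) = ε a * f h := by
  change augHIdeal k A H ι ≤ LinearMap.ker f ↔ _
  rw [augHIdeal, Submodule.span_le]
  refine ⟨fun hf a h => ?_, ?_⟩
  · have := (vanishes_on_ker_counit_iff (f ∘ₗ LinearMap.mulRight k h ∘ₗ ι)).1
      (fun a ha => hf ⟨a, h, ha, rfl⟩) a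
    simpa [hι] using this
  · rintro hf _ ⟨a, h, ha, rfl⟩
    simp [hf, ha]

lemma mem_hbarStar_iff_mul_iota (hC : CommByFinite k A H ι) (f : Module.Dual k H) :
    f ∈ hbarStar k A H ι ↔ ∀ (a : A) (h : H), f (h * ι a) = ε a * f h := by
  change augHIdeal k A H ι ≤ LinearMap.ker f ↔ _
  rw [augHIdeal_eq_span_mul_iota hC, Submodule.span_le]
  refine ⟨fun hf a h => ?_, ?_⟩
  · have := (vanishes_on_ker_counit_iff (f ∘ₗ LinearMap.mulLeft k h ∘ₗ ι)).1
      (fun a ha => hf ⟨h, a, ha, rfl⟩) a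
    simpa [hC.ι_one] using this
  · rintro hf _ ⟨h, a, ha, rfl⟩
    simp [hf, ha]

end Augmentation

variable (k) in
def comul₂ (H : Type) [Ring H] [Bialgebra k H] : H →ₐ[k] H ⊗[k] (H ⊗[k] H) :=
  (Algebra.TensorProduct.map (AlgHom.id k H) (Bialgebra.comulAlgHom k H)).comp
    (Bialgebra.comulAlgHom k H)

section DualAdjoint

variable {H : Type} [Ring H] [HopfAlgebra k H]

def adldForm (φ f : Module.Dual k H) : H ⊗[k] (H ⊗[k] H) →ₗ[k] k :=
  (TensorProduct.lid k k).toLinearMap ∘ₗ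
    TensorProduct.map (φ ∘ₗ LinearMap.mul' k H ∘ₗ (antipode k).lTensor H) f ∘ₗ
    (TensorProduct.assoc k H H H).symm.toLinearMap ∘ₗ
    ((TensorProduct.comm k H H).toLinearMap.lTensor H)

lemma adld_eq_adldForm_comul₂ (φ f : Module.Dual k H) (x : H) :
    adld k H φ f x = adldForm φ f (comul₂ k H x) := rfl

@[simp] lemma adldForm_tmul (φ f : Module.Dual k H) (x y z : H) :
    adldForm φ f (x ⊗ₜ (y ⊗ₜ z)) = φ (x * antipode k z) * f y := by
  simp [adldForm]

def adrdForm (φ f : Module.Dual k H) : H ⊗[k] (H ⊗[k] H) →ₗ[k] k :=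
  (TensorProduct.lid k k).toLinearMap ∘ₗ
    TensorProduct.map (φ ∘ₗ LinearMap.mul' k H ∘ₗ (antipode k).rTensor H) f ∘ₗ
    (TensorProduct.assoc k H H H).symm.toLinearMap ∘ₗ
    ((TensorProduct.comm k H H).toLinearMap.lTensor H)

lemma adrd_eq_adrdForm_comul₂ (φ f : Module.Dual k H) (x : H) :
    adrd k H φ f x = adrdForm φ f (comul₂ k H x) := rfl

@[simp] lemma adrdForm_tmul (φ f : Module.Dual k H) (x y z : H) :
    adrdForm φ f (x ⊗ₜ (y ⊗ₜ z)) = φ (antipode k x * z) * f y := by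
  simp [adrdForm]

variable {A : Type} [Ring A] [Bialgebra k A] {ι : A →ₗ[k] H}

lemma comul₂_map (hι : ∀ a, comul (R := k) (ι a) = TensorProduct.map ι ι (comul a)) (a : A) :
    comul₂ k H (ι a) = TensorProduct.map ι (TensorProduct.map ι ι) (comul₂ k A a) := by
  have hcomp : comul ∘ₗ ι = TensorProduct.map ι ι ∘ₗ comul := LinearMap.ext hι
  change (comul (R := k) (A := H)).lTensor H (comul (ι a)) = _
  rw [hι]
  change ((comul (R := k) (A := H)).lTensor H ∘ₗ TensorProduct.map ι ι) (comul a) =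
    (TensorProduct.map ι (TensorProduct.map ι ι) ∘ₗ (comul (R := k) (A := A)).lTensor A) (comul a)
  rw [LinearMap.lTensor_comp_map, LinearMap.map_comp_lTensor, hcomp]

lemma lTensor_counit_middle_comul₂ (a : A) :
    ((TensorProduct.lid k A).toLinearMap ∘ₗ (counit (R := k) (A := A)).rTensor A).lTensor A
      (comul₂ k A a) = comul a := by
  have hcounit : ((TensorProduct.lid k A).toLinearMap ∘ₗ (counit (R := k) (A := A)).rTensor A) ∘ₗ
      comul = LinearMap.id := by
    ext; simp
  rw [show comul₂ k A a = (comul (R := k) (A := A)).lTensor A (comul a) from rfl,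
    ← LinearMap.comp_apply, ← LinearMap.lTensor_comp, hcounit, LinearMap.lTensor_id,
    LinearMap.id_apply]

lemma adld_mul_iota (hι : ∀ a, comul (R := k) (ι a) = TensorProduct.map ι ι (comul a))
    (hε : ∀ a, ε (ι a) = ε a) {φ f : Module.Dual k H}
    (hf : ∀ (a : A) (u : H), f (u * ι a) = ε a * f u) (b : A) (y : H) :
    adld k H φ f (y * ι b) = ε b * adld k H φ f y := by
  -- `Q (a ⊗ b ⊗ c) = ε b • ι a * S (ι c)`: what remains of the `A`-legs once `f` absorbs
  -- the middle one
  set Q : A ⊗[k] (A ⊗[k] A) →ₗ[k] H := LinearMap.mul' k H ∘ₗ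
    TensorProduct.map ι (antipode k ∘ₗ ι) ∘ₗ
    ((TensorProduct.lid k A).toLinearMap ∘ₗ (counit (R := k) (A := A)).rTensor A).lTensor A
  have hQ : Q (comul₂ k A b) = ε b • 1 := by
    simp only [Q, LinearMap.comp_apply, lTensor_counit_middle_comul₂, ← LinearMap.lTensor_comp_map,
      ← hι, mul_antipode_lTensor_comul_apply, hε, Algebra.algebraMap_eq_smul_one]
  have key : ∀ T U, adldForm φ f (T * TensorProduct.map ι (TensorProduct.map ι ι) U) =
      adldForm φ f (T * (Q U ⊗ₜ (1 ⊗ₜ 1))) := by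
    have pure : ∀ a b c : A, adldForm φ f ∘ₗ LinearMap.mulRight k (ι a ⊗ₜ[k] (ι b ⊗ₜ[k] ι c)) =
        adldForm φ f ∘ₗ LinearMap.mulRight k (Q (a ⊗ₜ (b ⊗ₜ c)) ⊗ₜ[k] ((1 : H) ⊗ₜ[k] (1 : H))) :=
      fun a b c => TensorProduct.ext_threefold' fun u v w => by
        simp [Q, hf, antipode_mul_antidistrib, Algebra.TensorProduct.tmul_mul_tmul, mul_assoc,
          mul_left_comm]
    intro T U
    have hT := TensorProduct.ext_threefold'
      (g := adldForm φ f ∘ₗ LinearMap.mulLeft k T ∘ₗ TensorProduct.map ι (TensorProduct.map ι ι))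
      (h := adldForm φ f ∘ₗ LinearMap.mulLeft k T ∘ₗ
        (TensorProduct.mk k H (H ⊗[k] H)).flip ((1 : H) ⊗ₜ[k] (1 : H)) ∘ₗ Q)
      fun a b c => congr($(pure a b c) T)
    exact congr($hT U)
  rw [adld_eq_adldForm_comul₂, map_mul, comul₂_map hι, key, hQ, ← smul_tmul',
    ← Algebra.TensorProduct.one_def, ← Algebra.TensorProduct.one_def, mul_smul_comm, mul_one,
    map_smul, smul_eq_mul, adld_eq_adldForm_comul₂]

lemma adrd_iota_mul (hι : ∀ a, comul (R := k) (ι a) = TensorProduct.map ι ι (comul a))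
    (hε : ∀ a, ε (ι a) = ε a) {φ f : Module.Dual k H}
    (hf : ∀ (a : A) (u : H), f (ι a * u) = ε a * f u) (b : A) (y : H) :
    adrd k H φ f (ι b * y) = ε b * adrd k H φ f y := by
  set Q : A ⊗[k] (A ⊗[k] A) →ₗ[k] H := LinearMap.mul' k H ∘ₗ
    TensorProduct.map (antipode k ∘ₗ ι) ι ∘ₗ
    ((TensorProduct.lid k A).toLinearMap ∘ₗ (counit (R := k) (A := A)).rTensor A).lTensor A
  have hQ : Q (comul₂ k A b) = ε b • 1 := by
    simp only [Q, LinearMap.comp_apply, lTensor_counit_middle_comul₂, ← LinearMap.rTensor_comp_map,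
      ← hι, mul_antipode_rTensor_comul_apply, hε, Algebra.algebraMap_eq_smul_one]
  have key : ∀ U T, adrdForm φ f (TensorProduct.map ι (TensorProduct.map ι ι) U * T) =
      adrdForm φ f ((1 ⊗ₜ (1 ⊗ₜ Q U)) * T) := by
    have pure : ∀ a b c : A, adrdForm φ f ∘ₗ LinearMap.mulLeft k (ι a ⊗ₜ[k] (ι b ⊗ₜ[k] ι c)) =
        adrdForm φ f ∘ₗ LinearMap.mulLeft k ((1 : H) ⊗ₜ[k] ((1 : H) ⊗ₜ[k] Q (a ⊗ₜ (b ⊗ₜ c)))) :=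
      fun a b c => TensorProduct.ext_threefold' fun u v w => by
        simp [Q, hf, antipode_mul_antidistrib, Algebra.TensorProduct.tmul_mul_tmul, smul_mul_assoc,
          mul_assoc, mul_left_comm]
    intro U T
    have hU := TensorProduct.ext_threefold'
      (g := adrdForm φ f ∘ₗ LinearMap.mulRight k T ∘ₗ TensorProduct.map ι (TensorProduct.map ι ι))
      (h := adrdForm φ f ∘ₗ LinearMap.mulRight k T ∘ₗ
        TensorProduct.mk k H (H ⊗[k] H) 1 ∘ₗ TensorProduct.mk k H H 1 ∘ₗ Q)
      fun a b c => congr($(pure a b c) T)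
    exact congr($hU U)
  rw [adrd_eq_adrdForm_comul₂, map_mul, comul₂_map hι, key, hQ, tmul_smul, tmul_smul,
    ← Algebra.TensorProduct.one_def, ← Algebra.TensorProduct.one_def, smul_mul_assoc, one_mul,
    map_smul, smul_eq_mul, adrd_eq_adrdForm_comul₂]

end DualAdjoint

section Quotient

variable {A : Type} [CommRing A] [HopfAlgebra k A] {H : Type} [Ring H] [HopfAlgebra k H]
  {Hb : Type} [Ring Hb] [HopfAlgebra k Hb] {ι : A →ₗ[k] H} {π : H →ₗ[k] Hb}

lemma range_piDual (hker : LinearMap.ker π = augHIdeal k A H ι) :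
    Set.range (piDual k H Hb π) = hbarStar k A H ι := by
  have : Set.range (piDual k H Hb π) = LinearMap.range π.dualMap :=
    (LinearMap.coe_range π.dualMap).symm
  ext f
  rw [this, SetLike.mem_coe, LinearMap.range_dualMap_eq_dualAnnihilator_ker, hker]
  exact Submodule.mem_dualAnnihilator (R := k) f

lemma piDual_mem_finDual (hQ : IsHbarQuotient k A H Hb ι π) (β : Module.Dual k Hb) :
    piDual k H Hb π β ∈ finDual k H := by
  refine ⟨LinearMap.ker π, fun h x hx => ?_, fun x hx => ?_, ?_⟩
  · simp_all [hQ.π_mul]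
  · simp_all [piDual]
  · have := hQ.findim
    exact Module.Finite.equiv (π.quotKerEquivOfSurjective hQ.π_surj).symm

lemma piDual_conv (hcomul : ∀ x, comul (R := k) (π x) = TensorProduct.map π π (comul x))
    (β γ : Module.Dual k Hb) :
    piDual k H Hb π (conv k β γ) = conv k (piDual k H Hb π β) (piDual k H Hb π γ) := by
  ext x
  simp only [piDual, conv, LinearMap.comp_apply, hcomul, TensorProduct.map_comp]

end Quotient

end Paper

open Paper in
theorem statement_0_general
    (k : Type) [Field k]
    (A : Type) [CommRing A] [HopfAlgebra k A]
    (H : Type) [Ring H] [HopfAlgebra k H]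
    (Hb : Type) [Ring Hb] [HopfAlgebra k Hb]
    (ι : A →ₗ[k] H) (π : H →ₗ[k] Hb)
    (hCbF : CommByFinite k A H ι)
    (hQ : IsHbarQuotient k A H Hb ι π) :
    -- `π°` is injective
    Function.Injective (piDual k H Hb π) ∧
    -- `π°` is an algebra homomorphism for the convolution products
    (∀ β γ : Module.Dual k Hb,
      piDual k H Hb π (conv k β γ) = conv k (piDual k H Hb π β) (piDual k H Hb π γ)) ∧
    piDual k H Hb π (convOne k) = convOne k ∧
    -- `π°` is a coalgebra map (in pairing form) commuting with the antipodes,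
    -- hence a Hopf algebra homomorphism
    (∀ (β : Module.Dual k Hb) (x y : H),
      piDual k H Hb π β (x * y) = β (π x * π y)) ∧
    (∀ β : Module.Dual k Hb, piDual k H Hb π β 1 = β 1) ∧
    (∀ (β : Module.Dual k Hb) (h : H),
      piDual k H Hb π β (HopfAlgebra.antipode (R := k) h)
        = β (HopfAlgebra.antipode (R := k) (π h))) ∧
    -- the image of `π°` is `{f ∈ H° : f(A⁺H) = 0}`
    Set.range (piDual k H Hb π) = finDual k H ∩ hbarStar k A H ι ∧
    -- `= {f : f(ah) = ε(a)f(h) = f(ha) for all a ∈ A, h ∈ H}`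
    hbarStar k A H ι =
      {f : Module.Dual k H | ∀ (a : A) (h : H),
        f (ι a * h) = Coalgebra.counit (R := k) a * f h ∧
        f (h * ι a) = Coalgebra.counit (R := k) a * f h} ∧
    -- normality: the image is stable under both adjoint actions of `H°`
    (∀ φ ∈ finDual k H, ∀ β : Module.Dual k Hb,
      adld k H φ (piDual k H Hb π β) ∈ Set.range (piDual k H Hb π) ∧
      adrd k H φ (piDual k H Hb π β) ∈ Set.range (piDual k H Hb π)) := by
  have hrange := range_piDual (k := k) hQ.π_ker
  have hleft := mem_hbarStar_iff_iota_mul (k := k) hCbF.ι_one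
  have hright := mem_hbarStar_iff_mul_iota hCbF
  refine ⟨LinearMap.dualMap_injective_of_surjective hQ.π_surj, piDual_conv hQ.π_comul,
    LinearMap.ext hQ.π_counit, fun β x y => by simp [piDual, hQ.π_mul],
    fun β => by simp [piDual, hQ.π_one], fun β h => by simp [piDual, hQ.π_antipode], ?_, ?_, ?_⟩
  · rw [← hrange, Set.inter_eq_right.2]
    rintro _ ⟨β, rfl⟩
    exact piDual_mem_finDual hQ β
  · ext f
    simp only [Set.mem_ofPred_eq, forall_and]
    exact ⟨fun hf => ⟨(hleft f).1 hf, (hright f).1 hf⟩, fun hf => (hleft f).2 hf.1⟩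
  · intro φ _ β
    have hf : piDual k H Hb π β ∈ hbarStar k A H ι := hrange ▸ ⟨β, rfl⟩
    rw [hrange, hright, hleft]
    exact ⟨adld_mul_iota hCbF.ι_comul hCbF.ι_counit ((hright _).1 hf),
      adrd_iota_mul hCbF.ι_comul hCbF.ι_counit ((hleft _).1 hf)⟩

open Paper in
/-- For an affine commutative-by-finite Hopf algebra `A ⊆ H`
(with `A` semiprime or central, or `H` pointed), the map
`π° : H̄* → H°, β ↦ β ∘ π` is an injective Hopf algebra homomorphism whose image
is `{f ∈ H° : f(A⁺H) = 0} = {f ∈ H° : f(ah) = ε(a)f(h) = f(ha)}`, and this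
image is a normal Hopf subalgebra of `H°`. -/
theorem statement_0
    (k : Type) [Field k] [IsAlgClosed k]
    (A : Type) [CommRing A] [HopfAlgebra k A]
    (H : Type) [Ring H] [HopfAlgebra k H]
    (Hb : Type) [Ring Hb] [HopfAlgebra k Hb]
    (ι : A →ₗ[k] H) (π : H →ₗ[k] Hb)
    (hCbF : CommByFinite k A H ι)
    (hQ : IsHbarQuotient k A H Hb ι π)
    (hyp : StandingHyp k A H ι) :
    -- `π°` is injective
    Function.Injective (piDual k H Hb π) ∧
    -- `π°` is an algebra homomorphism for the convolution products
    (∀ β γ : Module.Dual k Hb,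
      piDual k H Hb π (conv k β γ) = conv k (piDual k H Hb π β) (piDual k H Hb π γ)) ∧
    piDual k H Hb π (convOne k) = convOne k ∧
    -- `π°` is a coalgebra map (in pairing form) commuting with the antipodes,
    -- hence a Hopf algebra homomorphism
    (∀ (β : Module.Dual k Hb) (x y : H),
      piDual k H Hb π β (x * y) = β (π x * π y)) ∧
    (∀ β : Module.Dual k Hb, piDual k H Hb π β 1 = β 1) ∧
    (∀ (β : Module.Dual k Hb) (h : H),
      piDual k H Hb π β (HopfAlgebra.antipode (R := k) h)
        = β (HopfAlgebra.antipode (R := k) (π h))) ∧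
    -- the image of `π°` is `{f ∈ H° : f(A⁺H) = 0}`
    Set.range (piDual k H Hb π) = finDual k H ∩ hbarStar k A H ι ∧
    -- `= {f : f(ah) = ε(a)f(h) = f(ha) for all a ∈ A, h ∈ H}`
    hbarStar k A H ι =
      {f : Module.Dual k H | ∀ (a : A) (h : H),
        f (ι a * h) = Coalgebra.counit (R := k) a * f h ∧
        f (h * ι a) = Coalgebra.counit (R := k) a * f h} ∧
    -- normality: the image is stable under both adjoint actions of `H°`
    (∀ φ ∈ finDual k H, ∀ β : Module.Dual k Hb,
      adld k H φ (piDual k H Hb π β) ∈ Set.range (piDual k H Hb π) ∧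
      adrd k H φ (piDual k H Hb π β) ∈ Set.range (piDual k H Hb π)) :=
  statement_0_general k A H Hb ι π hCbF hQ
end

section
/- Let A ⊆ H be an affine commutative-by-finite Hopf algebra with A semiprime or central in H, or H pointed. Suppose that as an algebra H = A #_σ H̄ is a crossed product whose cleaving map γ : H̄ → H is a coalgebra map (for instance if H ≅ A # H̄ is a smash product with H̄ a Hopf subalgebra of H). Then (CoSplit) holds, the induced action of A° on H̄* is trivial, and H° ≅ H̄* ⊗ A° as algebras, as left H̄*-modules, and as right A°-comodules. -/
open TensorProduct LinearMap Coalgebra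

/-!
Since the cleaving map `γ` is a coalgebra map, `γ 1` is group-like, and normality makes `H` the
span of the products `γ b * ι a`. The Doi–Takeuchi projection `Ψ = (γ⁻¹ ∘ π) ⋆ id` sends
`γ b * ι a` to `ε(b) ι a`, so `Π := ι⁻¹ ∘ (γ 1 * Ψ)` is a splitting with
`Π (γ b * ι a) = ε(b) g a`, where `ι g = γ 1` is group-like. Hence `Π` is a surjective coalgebra
map: its kernel is a coideal and `Π°` is an algebra map. On `γ b * ι a` both `π°β ⋆ Π°α` and
`Π°α ⋆ π°β` take the value `β(b) α(g a)`; this gives the commutation, the colinearity and, through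
a basis of `H̄`, the decomposition of `H°`. Finally, if `α` kills a cofinite ideal `I` of `A`, let
`K` be the set of `x` with `ad(H)(ι x) ⊆ ι(I)`. Then `K` is ad-stable, so `H · ι(K)` is a
two-sided ideal killed by `Π°α`, and it is cofinite because `K` contains the preimages of `I` under
the finitely many maps `ad(γ(B j))`, `B` a basis of `H̄`.
-/

namespace Paper

open Coalgebra TensorProduct WithConv

variable {k : Type} [Field k]

section Convolution

variable {C D : Type} [AddCommMonoid C] [Module k C] [Coalgebra k C]
  [AddCommMonoid D] [Module k D] [Coalgebra k D]

theorem conv_eq_ofConv_mul (f g : Module.Dual k C) :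
    conv k f g = (toConv f * toConv g).ofConv := by
  have hlid : (TensorProduct.lid k k).toLinearMap = LinearMap.mul' k k := by ext; simp
  rw [conv, hlid]
  rfl

theorem conv_apply_repr (f g : Module.Dual k C) {x : C} {ι : Type} (r : Coalgebra.Repr k x ι) :
    conv k f g x = ∑ i ∈ r.index, f (r.left i) * g (r.right i) := by
  rw [conv_eq_ofConv_mul]
  exact r.convMul_apply _ _

theorem conv_assoc (f g h : Module.Dual k C) :
    conv k (conv k f g) h = conv k f (conv k g h) := by
  simp only [conv_eq_ofConv_mul, WithConv.toConv_ofConv, mul_assoc]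

theorem conv_comp_coalgHom (φ : D →ₗc[k] C) (f g : Module.Dual k C) :
    conv k f g ∘ₗ φ.toLinearMap =
      conv k (f ∘ₗ φ.toLinearMap) (g ∘ₗ φ.toLinearMap) := by
  simp only [conv_eq_ofConv_mul]
  exact LinearMap.convMul_comp_coalgHom_distrib _ _ φ

theorem sum_counit_mul_apply (f : Module.Dual k C) {x : C} {ι : Type}
    (r : Coalgebra.Repr k x ι) :
    ∑ i ∈ r.index, counit (R := k) (r.left i) * f (r.right i) = f x := by
  simp_rw [← smul_eq_mul, ← map_smul, ← map_sum, Coalgebra.sum_counit_smul]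

theorem sum_apply_mul_counit (f : Module.Dual k C) {x : C} {ι : Type}
    (r : Coalgebra.Repr k x ι) :
    ∑ i ∈ r.index, f (r.left i) * counit (R := k) (r.right i) = f x := by
  have h := congrArg (fun t => f (TensorProduct.rid k C t)) (Coalgebra.sum_tmul_counit_eq r)
  simp only [map_sum, TensorProduct.rid_tmul, map_smul, smul_eq_mul, one_smul] at h
  simpa [mul_comm] using h

@[simps] noncomputable def reprMap (φ : C →ₗ[k] D)
    (hφ : ∀ x, comul (R := k) (φ x) = TensorProduct.map φ φ (comul x)) {x : C} {ι : Type}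
    (r : Coalgebra.Repr k x ι) : Coalgebra.Repr k (φ x) ι where
  index := r.index
  left := φ ∘ r.left
  right := φ ∘ r.right
  eq := by simp [hφ, ← r.eq]

theorem convMul_eq_one_of_sum_fin {B : Type} [Ring B] [Algebra k B] (f g : C →ₗ[k] B)
    (h : ∀ (c : C) (n : ℕ) (l r : Fin n → C), comul (R := k) c = ∑ i, l i ⊗ₜ[k] r i →
      ∑ i, f (l i) * g (r i) = counit (R := k) c • (1 : B)) :
    toConv f * toConv g = 1 := by
  ext c
  obtain ⟨S, hS⟩ := TensorProduct.exists_finset (R := k) (comul (R := k) c)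
  have hc : comul (R := k) c =
      ∑ i, (S.equivFin.symm i).1.1 ⊗ₜ[k] (S.equivFin.symm i).1.2 := by
    rw [hS, ← Finset.sum_coe_sort S, ← Equiv.sum_comp S.equivFin.symm]
  have hsum := h c _ _ _ hc
  rw [LinearMap.convMul_apply, hc]
  simpa [Algebra.smul_def] using hsum

end Convolution

section FiniteCodimension

variable {U V W : Type} [AddCommGroup U] [Module k U] [AddCommGroup V] [Module k V]
  [AddCommGroup W] [Module k W]

theorem finiteDimensional_quotient_iInf_comap {ι : Type} [Finite ι] (T : ι → V →ₗ[k] W)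
    (N : Submodule k W) [FiniteDimensional k (W ⧸ N)] :
    FiniteDimensional k (V ⧸ ⨅ i, N.comap (T i)) := by
  have hker : LinearMap.ker (LinearMap.pi fun i => N.mkQ ∘ₗ T i) = ⨅ i, N.comap (T i) := by
    simp [LinearMap.ker_pi, LinearMap.ker_comp]
  rw [← hker]
  exact Module.Finite.equiv (LinearMap.quotKerEquivRange _).symm

theorem finiteDimensional_quotient_comap (T : V →ₗ[k] W) (N : Submodule k W)
    [FiniteDimensional k (W ⧸ N)] : FiniteDimensional k (V ⧸ N.comap T) := by
  have := finiteDimensional_quotient_iInf_comap (fun _ : Unit => T) N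
  rwa [iInf_const] at this

theorem finiteDimensional_of_iSup_range_eq_top {ι : Type} [Finite ι] (q : ι → U →ₗ[k] V)
    (N : Submodule k U) [FiniteDimensional k (U ⧸ N)] (hN : ∀ i, N ≤ LinearMap.ker (q i))
    (htop : ⨆ i, LinearMap.range (q i) = ⊤) : FiniteDimensional k V := by
  have hrange : ∀ i, FiniteDimensional k (LinearMap.range (q i)) := fun i => by
    rw [← Submodule.range_liftQ N (q i) (hN i)]
    infer_instance
  have : FiniteDimensional k (⨆ i, LinearMap.range (q i) : Submodule k V) := inferInstance
  rw [htop] at this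
  exact Module.Finite.equiv Submodule.topEquiv

end FiniteCodimension

section FiniteDual

variable {A H : Type} [Ring A] [Algebra k A] [Ring H] [Algebra k H]

theorem comp_algHom_mem_finDual {f : Module.Dual k H} (hf : f ∈ finDual k H)
    (φ : A →ₐ[k] H) :
    f ∘ₗ φ.toLinearMap ∈ finDual k A := by
  obtain ⟨J, hJ, hJf, _⟩ := hf
  refine ⟨J.comap φ.toLinearMap, fun a x hx => ?_, fun x hx => hJf hx,
    finiteDimensional_quotient_comap _ J⟩
  simpa only [Submodule.mem_comap, AlgHom.toLinearMap_apply, map_mul] using hJ (φ a) _ hx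

theorem comp_mulLeft_mem_finDual {f : Module.Dual k H} (hf : f ∈ finDual k H) (y : H) :
    f ∘ₗ LinearMap.mulLeft k y ∈ finDual k H := by
  obtain ⟨J, hJ, hJf, hJfd⟩ := hf
  exact ⟨J, hJ, fun x hx => hJf (hJ y x hx).1, hJfd⟩

theorem map_mul_eq_sum_basis {M J : Type} [AddCommGroup M] [Module k M] [Fintype J]
    (f : M →ₗ[k] H) (B : Module.Basis J k M) (m : M) (y : H) :
    f m * y = ∑ j, B.repr m j • (f (B j) * y) := by
  calc f m * y = f (∑ j, B.repr m j • B j) * y := by rw [B.sum_repr]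
    _ = _ := by simp only [map_sum, map_smul, Finset.sum_mul, smul_mul_assoc]

end FiniteDual

theorem isCoideal_ker_of_surjective {H D : Type} [Ring H] [HopfAlgebra k H]
    [AddCommGroup D] [Module k D] [Coalgebra k D] (f : H →ₗc[k] D)
    (hf : Function.Surjective f) : IsCoideal k H (LinearMap.ker f.toLinearMap) := by
  refine ⟨fun x hx => ?_, fun x hx => ?_⟩
  · rw [← CoalgHomClass.counit_comp_apply f x]
    simpa using congrArg (counit (R := k)) hx
  · have hmem : comul x ∈ LinearMap.ker (TensorProduct.map f.toLinearMap f.toLinearMap) := by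
      rw [LinearMap.mem_ker, ← LinearMap.comp_apply, f.map_comp_comul, LinearMap.comp_apply,
        LinearMap.mem_ker.mp hx, map_zero]
    rwa [TensorProduct.map_ker (LinearMap.exact_subtype_ker_map _) hf
      (LinearMap.exact_subtype_ker_map _) hf, sup_comm] at hmem

section AdjointAction

variable {H : Type} [Ring H] [HopfAlgebra k H]

theorem adr_apply_repr (h a : H) {ι : Type} (r : Coalgebra.Repr k h ι) :
    adr k H h a = ∑ i ∈ r.index, HopfAlgebra.antipode k (r.left i) * a * r.right i := by
  simp [adr, ← r.eq]

theorem adr_mul (g h a : H) : adr k H (g * h) a = adr k H h (adr k H g a) := by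
  simp only [adr_apply_repr _ _ ((ℛ k g).mul (ℛ k h)), adr_apply_repr _ _ (ℛ k h),
    adr_apply_repr _ _ (ℛ k g), Coalgebra.Repr.mul_left, Coalgebra.Repr.mul_right,
    Coalgebra.Repr.mul_index, Finset.sum_product, Finset.mul_sum, Finset.sum_mul,
    HopfAlgebra.antipode_mul_antidistrib, mul_assoc]
  exact Finset.sum_comm

theorem adr_one (a : H) : adr k H 1 a = a := by
  simp [adr, Bialgebra.comul_one, Algebra.TensorProduct.one_def]

variable (k) in
noncomputable def adrBilin : H →ₗ[k] H →ₗ[k] H :=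
  LinearMap.mk₂ k (adr k H)
    (fun g h a => by simp [adr])
    (fun c h a => by simp [adr])
    (fun h a b => by simp [adr_apply_repr _ _ (ℛ k h), mul_add, add_mul, Finset.sum_add_distrib])
    (fun c h a => by simp [adr_apply_repr _ _ (ℛ k h), Finset.smul_sum])

theorem adrBilin_apply (h a : H) : adrBilin k h a = adr k H h a := rfl

theorem mul_eq_sum_mul_adr (a x : H) {ι : Type} (r : Coalgebra.Repr k x ι) :
    a * x = ∑ i ∈ r.index, r.left i * adr k H (r.right i) a := by
  let Θ : H ⊗[k] (H ⊗[k] H) →ₗ[k] H :=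
    LinearMap.mul' k H ∘ₗ TensorProduct.map LinearMap.id
      (LinearMap.mul' k H ∘ₗ
        TensorProduct.map (LinearMap.mulRight k a ∘ₗ HopfAlgebra.antipode k) LinearMap.id)
  have hΘ : ∀ u v w, Θ (u ⊗ₜ (v ⊗ₜ w)) = u * HopfAlgebra.antipode k v * (a * w) := by
    intro u v w; simp [Θ, mul_assoc]
  have key := congrArg Θ
    (Coalgebra.sum_tmul_tmul_eq r (fun i => ℛ k (r.left i)) (fun i => ℛ k (r.right i)))
  -- coassociativity, read through `u ⊗ v ⊗ w ↦ u S(v) a w`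
  simp only [map_sum, hΘ, ← Finset.sum_mul, HopfAlgebra.sum_mul_antipode_eq_smul,
    smul_mul_assoc, one_mul] at key
  calc a * x = ∑ i ∈ r.index, counit (R := k) (r.left i) • (a * r.right i) := by
        simp_rw [← mul_smul_comm, ← Finset.mul_sum, Coalgebra.sum_counit_smul]
    _ = _ := key
    _ = _ := Finset.sum_congr rfl fun i _ => by
        rw [adr_apply_repr _ _ (ℛ k (r.right i)), Finset.mul_sum]
        simp only [mul_assoc]

end AdjointAction

section Cleaving

variable {A H Hb : Type} [CommRing A] [HopfAlgebra k A] [Ring H] [HopfAlgebra k H]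
  [Ring Hb] [HopfAlgebra k Hb]

noncomputable def adCore (ι : A →ₗ[k] H) (I : Submodule k A) : Submodule k A :=
  ⨅ h : H, (I.map ι).comap (adrBilin k h ∘ₗ ι)

theorem mem_adCore {ι : A →ₗ[k] H} {I : Submodule k A} {x : A} :
    x ∈ adCore ι I ↔ ∀ h, adr k H h (ι x) ∈ I.map ι := by
  simp [adCore, adrBilin_apply]

def leftIdealOf (ι : A →ₗ[k] H) (K : Submodule k A) : Submodule k H :=
  Submodule.span k {z | ∃ h, ∃ x ∈ K, z = h * ι x}

theorem mul_ι_mem_leftIdealOf {ι : A →ₗ[k] H} {K : Submodule k A} (h : H) {x : A}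
    (hx : x ∈ K) :
    h * ι x ∈ leftIdealOf ι K :=
  Submodule.subset_span ⟨h, x, hx, rfl⟩

theorem mul_mem_leftIdealOf {ι : A →ₗ[k] H} {K : Submodule k A} (y : H) {z : H}
    (hz : z ∈ leftIdealOf ι K) : y * z ∈ leftIdealOf ι K := by
  refine (Submodule.span_le (p := (leftIdealOf ι K).comap (LinearMap.mulLeft k y)) |>.mpr ?_) hz
  rintro _ ⟨h, x, hx, rfl⟩
  simpa only [SetLike.mem_coe, Submodule.mem_comap, LinearMap.mulLeft_apply, ← mul_assoc]
    using mul_ι_mem_leftIdealOf (y * h) hx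

theorem mem_leftIdealOf_mul {ι : A →ₗ[k] H} {K : Submodule k A}
    (hK : ∀ x ∈ K, ∀ h, ∃ y ∈ K, adr k H h (ι x) = ι y) (y : H) {z : H}
    (hz : z ∈ leftIdealOf ι K) : z * y ∈ leftIdealOf ι K := by
  refine (Submodule.span_le (p := (leftIdealOf ι K).comap (LinearMap.mulRight k y)) |>.mpr ?_) hz
  rintro _ ⟨h, x, hx, rfl⟩
  rw [SetLike.mem_coe, Submodule.mem_comap, LinearMap.mulRight_apply, mul_assoc,
    mul_eq_sum_mul_adr (ι x) y (ℛ k y), Finset.mul_sum]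
  refine Submodule.sum_mem _ fun i _ => ?_
  obtain ⟨z, hz, hzx⟩ := hK x hx ((ℛ k y).right i)
  rw [hzx, ← mul_assoc]
  exact mul_ι_mem_leftIdealOf _ hz

namespace CommByFinite

variable {ι : A →ₗ[k] H}

noncomputable def algHom (hA : CommByFinite k A H ι) : A →ₐ[k] H :=
  AlgHom.ofLinearMap ι hA.ι_one hA.ι_mul

@[simp] theorem toLinearMap_algHom (hA : CommByFinite k A H ι) : hA.algHom.toLinearMap = ι :=
  rfl

theorem adr_ι_ι (hA : CommByFinite k A H ι) (a x : A) :
    adr k H (ι a) (ι x) = counit (R := k) a • ι x := by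
  have hterm : ∀ u v : A, HopfAlgebra.antipode k (ι u) * ι x * ι v
      = ι (x * (HopfAlgebra.antipode k u * v)) := fun u v => by
    rw [← hA.ι_antipode, ← hA.ι_mul, ← hA.ι_mul, mul_comm _ x, mul_assoc]
  rw [adr_apply_repr (ι a) _ (reprMap ι hA.ι_comul (ℛ k a))]
  simp only [reprMap_index, reprMap_left, reprMap_right, Function.comp_apply, hterm, ← map_sum,
    ← Finset.mul_sum, HopfAlgebra.sum_antipode_mul_eq_smul, mul_smul_comm, mul_one, map_smul]

theorem adCore_le (hA : CommByFinite k A H ι) (I : Submodule k A) : adCore ι I ≤ I := by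
  intro x hx
  obtain ⟨y, hy, hyx⟩ := mem_adCore.mp hx 1
  rw [adr_one] at hyx
  rwa [← hA.ι_inj hyx]

theorem exists_adr_eq_of_mem_adCore (hA : CommByFinite k A H ι) {I : Submodule k A} {x : A}
    (hx : x ∈ adCore ι I) (h : H) : ∃ y ∈ adCore ι I, adr k H h (ι x) = ι y := by
  obtain ⟨y, hy⟩ := hA.normal_right h x
  refine ⟨y, mem_adCore.mpr fun h' => ?_, hy.symm⟩
  rw [hy, ← adr_mul]
  exact mem_adCore.mp hx _

end CommByFinite

noncomputable def IsHbarQuotient.coalgHom {ι : A →ₗ[k] H} {π : H →ₗ[k] Hb}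
    (hQ : IsHbarQuotient k A H Hb ι π) : H →ₗc[k] Hb where
  toLinearMap := π
  counit_comp := LinearMap.ext hQ.π_counit
  map_comp_comul := LinearMap.ext fun x => (hQ.π_comul x).symm

theorem IsHbarQuotient.piDual_conv {ι : A →ₗ[k] H} {π : H →ₗ[k] Hb}
    (hQ : IsHbarQuotient k A H Hb ι π) (β' β : Module.Dual k Hb) :
    piDual k H Hb π (conv k β' β) = conv k (piDual k H Hb π β') (piDual k H Hb π β) :=
  conv_comp_coalgHom hQ.coalgHom β' β

/-- The Doi–Takeuchi projection `Ψ`, for `γ'` the convolution inverse of the cleaving map. -/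
noncomputable def cleavingProj (π : H →ₗ[k] Hb) (γ' : Hb →ₗ[k] H) : H →ₗ[k] H :=
  (toConv (γ' ∘ₗ π) * toConv LinearMap.id).ofConv

theorem cleavingProj_apply_repr (π : H →ₗ[k] Hb) (γ' : Hb →ₗ[k] H) (x : H) {ι : Type}
    (r : Coalgebra.Repr k x ι) :
    cleavingProj π γ' x = ∑ i ∈ r.index, γ' (π (r.left i)) * r.right i :=
  r.convMul_apply _ _

structure IsCoalgCleaving (ι : A →ₗ[k] H) (π : H →ₗ[k] Hb) (γ γ' : Hb →ₗ[k] H) :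
    Prop where
  commByFinite : CommByFinite k A H ι
  quotient : IsHbarQuotient k A H Hb ι π
  comul_γ : ∀ b, comul (R := k) (γ b) = TensorProduct.map γ γ (comul b)
  counit_γ : ∀ b, counit (R := k) (γ b) = counit (R := k) b
  comod_γ : ∀ b, TensorProduct.map LinearMap.id π (comul (R := k) (γ b)) =
    TensorProduct.map γ LinearMap.id (comul b)
  conv_γ_γ' : toConv γ * toConv γ' = 1
  conv_γ'_γ : toConv γ' * toConv γ = 1
  span_ι_mul_γ : Submodule.span k {x | ∃ a b, x = ι a * γ b} = ⊤

namespace IsCoalgCleaving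

variable {ι : A →ₗ[k] H} {π : H →ₗ[k] Hb} {γ γ' : Hb →ₗ[k] H}

theorem π_γ (hh : IsCoalgCleaving ι π γ γ') (b : Hb) : π (γ b) = b := by
  have h := congrArg (TensorProduct.lift (LinearMap.lsmul k Hb ∘ₗ counit (R := k) (A := H)))
    (hh.comod_γ b)
  rw [hh.comul_γ, ← (ℛ k b).eq] at h
  simp only [map_sum, TensorProduct.map_tmul, TensorProduct.lift.tmul, LinearMap.comp_apply,
    LinearMap.lsmul_apply, LinearMap.id_apply, hh.counit_γ, ← map_smul,
    Coalgebra.sum_counit_smul] at h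
  rwa [← map_sum, ← map_sum, Coalgebra.sum_counit_smul] at h

theorem π_ι (hh : IsCoalgCleaving ι π γ γ') (a : A) :
    π (ι a) = counit (R := k) a • 1 := by
  have hmem : ι (a - counit (R := k) a • 1) ∈ augHIdeal k A H ι :=
    Submodule.subset_span ⟨_, 1, by simp [Bialgebra.counit_one], (mul_one _).symm⟩
  rw [← hh.quotient.π_ker, LinearMap.mem_ker, map_sub, map_smul, map_sub, map_smul,
    hh.commByFinite.ι_one, hh.quotient.π_one, sub_eq_zero] at hmem
  exact hmem

theorem π_γ_mul_ι (hh : IsCoalgCleaving ι π γ γ') (b : Hb) (a : A) :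
    π (γ b * ι a) = counit (R := k) a • b := by
  rw [hh.quotient.π_mul, hh.π_γ, hh.π_ι, mul_smul_comm, mul_one]

theorem span_γ_mul_ι (hh : IsCoalgCleaving ι π γ γ') :
    Submodule.span k {x | ∃ b a, x = γ b * ι a} = ⊤ := by
  rw [eq_top_iff, ← hh.span_ι_mul_γ, Submodule.span_le]
  rintro _ ⟨a, b, rfl⟩
  rw [mul_eq_sum_mul_adr (ι a) (γ b) (reprMap γ hh.comul_γ (ℛ k b))]
  refine Submodule.sum_mem _ fun i _ => ?_
  obtain ⟨x, hx⟩ := hh.commByFinite.normal_right (γ ((ℛ k b).right i)) a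
  simp only [reprMap_left, reprMap_right, Function.comp_apply, ← hx]
  exact Submodule.subset_span ⟨_, x, rfl⟩

theorem ext_γ_mul_ι (hh : IsCoalgCleaving ι π γ γ') {V : Type} [AddCommMonoid V] [Module k V]
    {f g : H →ₗ[k] V} (hfg : ∀ b a, f (γ b * ι a) = g (γ b * ι a)) : f = g :=
  LinearMap.ext_on hh.span_γ_mul_ι (by rintro _ ⟨b, a, rfl⟩; exact hfg b a)

theorem apply_mem_of_forall_γ_mul_ι (hh : IsCoalgCleaving ι π γ γ') {V : Type}
    [AddCommMonoid V] [Module k V] {f : H →ₗ[k] V} {S : Submodule k V}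
    (hf : ∀ b a, f (γ b * ι a) ∈ S) (x : H) :
    f x ∈ S := by
  have hle : Submodule.span k {x | ∃ b a, x = γ b * ι a} ≤ S.comap f :=
    Submodule.span_le.mpr (by rintro _ ⟨b, a, rfl⟩; exact hf b a)
  rw [hh.span_γ_mul_ι] at hle
  exact hle Submodule.mem_top

theorem iSup_range_mulLeft_γ_comp_ι (hh : IsCoalgCleaving ι π γ γ') {J : Type} [Fintype J]
    (B : Module.Basis J k Hb) :
    ⨆ j, LinearMap.range (LinearMap.mulLeft k (γ (B j)) ∘ₗ ι) = ⊤ := by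
  rw [eq_top_iff, ← hh.span_γ_mul_ι, Submodule.span_le]
  rintro _ ⟨b, a, rfl⟩
  rw [map_mul_eq_sum_basis γ B]
  exact Submodule.sum_mem _ fun j _ => Submodule.smul_mem _ _
    (Submodule.mem_iSup_of_mem j ⟨a, rfl⟩)

theorem cleavingProj_mul_ι (hh : IsCoalgCleaving ι π γ γ') (x : H) (a : A) :
    cleavingProj π γ' (x * ι a) = cleavingProj π γ' x * ι a := by
  rw [cleavingProj_apply_repr _ _ _ ((ℛ k x).mul (reprMap ι hh.commByFinite.ι_comul (ℛ k a))),
    cleavingProj_apply_repr _ _ _ (ℛ k x), Finset.sum_mul]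
  simp only [Coalgebra.Repr.mul_index, Coalgebra.Repr.mul_left, Coalgebra.Repr.mul_right,
    reprMap_index, reprMap_left, reprMap_right, Function.comp_apply, Finset.sum_product,
    hh.quotient.π_mul, hh.π_ι,
    mul_smul_comm, mul_one, map_smul, smul_mul_assoc]
  refine Finset.sum_congr rfl fun i _ => ?_
  simp_rw [← mul_assoc, ← mul_smul_comm, ← Finset.mul_sum, ← map_smul, ← map_sum,
    Coalgebra.sum_counit_smul]

theorem cleavingProj_γ (hh : IsCoalgCleaving ι π γ γ') (b : Hb) :
    cleavingProj π γ' (γ b) = counit (R := k) b • 1 := by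
  have h := congr($(hh.conv_γ'_γ) b)
  rw [(ℛ k b).convMul_apply, LinearMap.convOne_apply, Algebra.algebraMap_eq_smul_one] at h
  rw [cleavingProj_apply_repr _ _ _ (reprMap γ hh.comul_γ (ℛ k b)), ← h]
  simp [hh.π_γ]

theorem cleavingProj_γ_mul_ι (hh : IsCoalgCleaving ι π γ γ') (b : Hb) (a : A) :
    cleavingProj π γ' (γ b * ι a) = counit (R := k) b • ι a := by
  rw [hh.cleavingProj_mul_ι, hh.cleavingProj_γ, smul_mul_assoc, one_mul]

theorem cleavingProj_one (hh : IsCoalgCleaving ι π γ γ') : cleavingProj π γ' 1 = γ' 1 := by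
  simp [cleavingProj, Bialgebra.comul_one, Algebra.TensorProduct.one_def, hh.quotient.π_one]

theorem cleavingProj_mem_range (hh : IsCoalgCleaving ι π γ γ') (x : H) :
    cleavingProj π γ' x ∈ LinearMap.range ι :=
  hh.apply_mem_of_forall_γ_mul_ι (fun b a => by
    rw [hh.cleavingProj_γ_mul_ι]
    exact Submodule.smul_mem _ _ ⟨a, rfl⟩) x

theorem isGroupLikeElem_γ_one (hh : IsCoalgCleaving ι π γ γ') : IsGroupLikeElem k (γ 1) where
  counit_eq_one := by rw [hh.counit_γ, Bialgebra.counit_one]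
  comul_eq_tmul_self := by
    rw [hh.comul_γ, Bialgebra.comul_one, Algebra.TensorProduct.one_def, TensorProduct.map_tmul]

theorem γ_one_mul_γ'_one (hh : IsCoalgCleaving ι π γ γ') : γ 1 * γ' 1 = 1 := by
  simpa [Bialgebra.comul_one, Algebra.TensorProduct.one_def] using congr($(hh.conv_γ_γ') 1)

theorem γ'_one_eq_antipode (hh : IsCoalgCleaving ι π γ γ') :
    γ' 1 = HopfAlgebra.antipode k (γ 1) :=
  (left_inv_eq_right_inv hh.isGroupLikeElem_γ_one.antipode_mul_cancel hh.γ_one_mul_γ'_one).symm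

theorem γ_one_mem_range (hh : IsCoalgCleaving ι π γ γ') : γ 1 ∈ LinearMap.range ι := by
  obtain ⟨c, hc⟩ := hh.cleavingProj_mem_range 1
  refine ⟨HopfAlgebra.antipode k c, ?_⟩
  rw [hh.commByFinite.ι_antipode, hc, hh.cleavingProj_one, hh.γ'_one_eq_antipode,
    hh.isGroupLikeElem_γ_one.antipode_antipode]

noncomputable def grp (hh : IsCoalgCleaving ι π γ γ') : A := hh.γ_one_mem_range.choose

theorem ι_grp (hh : IsCoalgCleaving ι π γ γ') : ι hh.grp = γ 1 :=
  hh.γ_one_mem_range.choose_spec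

theorem isGroupLikeElem_grp (hh : IsCoalgCleaving ι π γ γ') : IsGroupLikeElem k hh.grp where
  counit_eq_one := by
    rw [← hh.commByFinite.ι_counit, hh.ι_grp, hh.isGroupLikeElem_γ_one.counit_eq_one]
  comul_eq_tmul_self := by
    apply TensorProduct.map_injective_of_flat_flat ι ι hh.commByFinite.ι_inj
      hh.commByFinite.ι_inj
    rw [← hh.commByFinite.ι_comul, hh.ι_grp, hh.isGroupLikeElem_γ_one.comul_eq_tmul_self,
      TensorProduct.map_tmul, hh.ι_grp]

theorem γ'_one_mul_ι_grp_mul (hh : IsCoalgCleaving ι π γ γ') (a : A) :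
    γ' 1 * ι (hh.grp * a) = ι a := by
  rw [hh.commByFinite.ι_mul, hh.ι_grp, ← mul_assoc, hh.γ'_one_eq_antipode,
    hh.isGroupLikeElem_γ_one.antipode_mul_cancel, one_mul]

theorem γ_one_mul_cleavingProj_mem_range (hh : IsCoalgCleaving ι π γ γ') (x : H) :
    γ 1 * cleavingProj π γ' x ∈ LinearMap.range ι := by
  obtain ⟨y, hy⟩ := hh.cleavingProj_mem_range x
  exact ⟨hh.grp * y, by rw [hh.commByFinite.ι_mul, hh.ι_grp, hy]⟩

noncomputable def splitting (hh : IsCoalgCleaving ι π γ γ') : H →ₗ[k] A :=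
  (LinearEquiv.ofInjective ι hh.commByFinite.ι_inj).symm.toLinearMap ∘ₗ
    (LinearMap.mulLeft k (γ 1) ∘ₗ cleavingProj π γ').codRestrict (LinearMap.range ι)
      hh.γ_one_mul_cleavingProj_mem_range

theorem ι_splitting (hh : IsCoalgCleaving ι π γ γ') (x : H) :
    ι (hh.splitting x) = γ 1 * cleavingProj π γ' x := by
  simp [splitting]
  rfl

theorem splitting_eq_of_ι_eq (hh : IsCoalgCleaving ι π γ γ') {x : H} {a : A}
    (h : ι a = γ 1 * cleavingProj π γ' x) : hh.splitting x = a :=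
  hh.commByFinite.ι_inj (by rw [hh.ι_splitting, h])

theorem splitting_ι (hh : IsCoalgCleaving ι π γ γ') (a : A) : hh.splitting (ι a) = a := by
  refine hh.splitting_eq_of_ι_eq ?_
  rw [← one_mul (ι a), hh.cleavingProj_mul_ι, hh.cleavingProj_one, ← mul_assoc,
    hh.γ_one_mul_γ'_one, one_mul]

theorem splitting_mul_ι (hh : IsCoalgCleaving ι π γ γ') (x : H) (a : A) :
    hh.splitting (x * ι a) = hh.splitting x * a := by
  refine hh.splitting_eq_of_ι_eq ?_
  rw [hh.commByFinite.ι_mul, hh.ι_splitting, hh.cleavingProj_mul_ι, mul_assoc]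

theorem splitting_γ_mul_ι (hh : IsCoalgCleaving ι π γ γ') (b : Hb) (a : A) :
    hh.splitting (γ b * ι a) = counit (R := k) b • (hh.grp * a) := by
  refine hh.splitting_eq_of_ι_eq ?_
  rw [hh.cleavingProj_γ_mul_ι, map_smul, hh.commByFinite.ι_mul, hh.ι_grp, mul_smul_comm]

theorem surjective_splitting (hh : IsCoalgCleaving ι π γ γ') :
    Function.Surjective hh.splitting :=
  fun a => ⟨ι a, hh.splitting_ι a⟩

theorem counit_comp_splitting (hh : IsCoalgCleaving ι π γ γ') :
    counit (R := k) ∘ₗ hh.splitting = counit := by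
  refine hh.ext_γ_mul_ι fun b a => ?_
  simp [hh.splitting_γ_mul_ι, hh.isGroupLikeElem_grp.counit_eq_one, hh.counit_γ,
    hh.commByFinite.ι_counit]

theorem map_splitting_comp_comul (hh : IsCoalgCleaving ι π γ γ') :
    TensorProduct.map hh.splitting hh.splitting ∘ₗ comul = comul ∘ₗ hh.splitting := by
  refine hh.ext_γ_mul_ι fun b a => ?_
  rw [LinearMap.comp_apply, LinearMap.comp_apply, hh.splitting_γ_mul_ι, map_smul,
    Bialgebra.comul_mul hh.grp, hh.isGroupLikeElem_grp.comul_eq_tmul_self, ← (ℛ k a).eq,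
    ← ((reprMap γ hh.comul_γ (ℛ k b)).mul (reprMap ι hh.commByFinite.ι_comul (ℛ k a))).eq]
  simp only [map_sum, Coalgebra.Repr.mul_index, Coalgebra.Repr.mul_left,
    Coalgebra.Repr.mul_right, reprMap_index, reprMap_left, reprMap_right, Function.comp_apply,
    TensorProduct.map_tmul, hh.splitting_γ_mul_ι, Finset.sum_product,
    TensorProduct.smul_tmul_smul, ← Finset.smul_sum, ← Finset.sum_smul,
    sum_counit_mul_apply (counit (R := k)), Finset.mul_sum, Algebra.TensorProduct.tmul_mul_tmul]

noncomputable def splittingCoalgHom (hh : IsCoalgCleaving ι π γ γ') : H →ₗc[k] A where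
  toLinearMap := hh.splitting
  counit_comp := hh.counit_comp_splitting
  map_comp_comul := hh.map_splitting_comp_comul

theorem isCoideal_ker_splitting (hh : IsCoalgCleaving ι π γ γ') :
    IsCoideal k H (LinearMap.ker hh.splitting) :=
  isCoideal_ker_of_surjective hh.splittingCoalgHom hh.surjective_splitting

theorem PiDual_splitting_conv (hh : IsCoalgCleaving ι π γ γ') (α β : Module.Dual k A) :
    PiDual k A H hh.splitting (conv k α β) =
      conv k (PiDual k A H hh.splitting α) (PiDual k A H hh.splitting β) :=
  conv_comp_coalgHom hh.splittingCoalgHom α β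

theorem conv_apply_γ_mul_ι (hh : IsCoalgCleaving ι π γ γ') (b : Hb) (a : A)
    (f g : Module.Dual k H) :
    conv k f g (γ b * ι a) = ∑ i ∈ (ℛ k b).index, ∑ j ∈ (ℛ k a).index,
      f (γ ((ℛ k b).left i) * ι ((ℛ k a).left j)) *
        g (γ ((ℛ k b).right i) * ι ((ℛ k a).right j)) := by
  rw [conv_apply_repr _ _
    ((reprMap γ hh.comul_γ (ℛ k b)).mul (reprMap ι hh.commByFinite.ι_comul (ℛ k a)))]
  simp only [Coalgebra.Repr.mul_index, Coalgebra.Repr.mul_left, Coalgebra.Repr.mul_right,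
    reprMap_index, reprMap_left, reprMap_right, Function.comp_apply, Finset.sum_product]

theorem conv_apply_γ_mul_ι_of_left_right (hh : IsCoalgCleaving ι π γ γ')
    {f g : Module.Dual k H}
    {β : Module.Dual k Hb} {α : Module.Dual k A}
    (hf : ∀ b a, f (γ b * ι a) = β b * counit (R := k) a)
    (hg : ∀ b a, g (γ b * ι a) = counit (R := k) b * α a) (b : Hb) (a : A) :
    conv k f g (γ b * ι a) = β b * α a := by
  rw [hh.conv_apply_γ_mul_ι, ← sum_apply_mul_counit β (ℛ k b),
    ← sum_counit_mul_apply α (ℛ k a), Finset.sum_mul_sum]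
  simp only [hf, hg]
  exact Finset.sum_congr rfl fun _ _ => Finset.sum_congr rfl fun _ _ => by ring

theorem conv_apply_γ_mul_ι_of_right_left (hh : IsCoalgCleaving ι π γ γ')
    {f g : Module.Dual k H}
    {β : Module.Dual k Hb} {α : Module.Dual k A}
    (hf : ∀ b a, f (γ b * ι a) = counit (R := k) b * α a)
    (hg : ∀ b a, g (γ b * ι a) = β b * counit (R := k) a) (b : Hb) (a : A) :
    conv k f g (γ b * ι a) = α a * β b := by
  rw [hh.conv_apply_γ_mul_ι, mul_comm, ← sum_counit_mul_apply β (ℛ k b),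
    ← sum_apply_mul_counit α (ℛ k a), Finset.sum_mul_sum]
  simp only [hf, hg]
  exact Finset.sum_congr rfl fun _ _ => Finset.sum_congr rfl fun _ _ => by ring

theorem piDual_apply_γ_mul_ι (hh : IsCoalgCleaving ι π γ γ') (β : Module.Dual k Hb) (b : Hb)
    (a : A) : piDual k H Hb π β (γ b * ι a) = β b * counit (R := k) a := by
  rw [piDual, LinearMap.comp_apply, hh.π_γ_mul_ι, map_smul, smul_eq_mul, mul_comm]

theorem PiDual_splitting_apply_γ_mul_ι (hh : IsCoalgCleaving ι π γ γ') (α : Module.Dual k A)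
    (b : Hb) (a : A) :
    PiDual k A H hh.splitting α (γ b * ι a) = counit (R := k) b * α (hh.grp * a) := by
  rw [PiDual, LinearMap.comp_apply, hh.splitting_γ_mul_ι, map_smul, smul_eq_mul]

theorem conv_piDual_PiDual_apply (hh : IsCoalgCleaving ι π γ γ') (β : Module.Dual k Hb)
    (α : Module.Dual k A) (b : Hb) (a : A) :
    conv k (piDual k H Hb π β) (PiDual k A H hh.splitting α) (γ b * ι a) =
      β b * α (hh.grp * a) :=
  hh.conv_apply_γ_mul_ι_of_left_right (α := α ∘ₗ LinearMap.mulLeft k hh.grp)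
    (hh.piDual_apply_γ_mul_ι β) (hh.PiDual_splitting_apply_γ_mul_ι α) b a

theorem conv_PiDual_piDual_apply (hh : IsCoalgCleaving ι π γ γ') (β : Module.Dual k Hb)
    (α : Module.Dual k A) (b : Hb) (a : A) :
    conv k (PiDual k A H hh.splitting α) (piDual k H Hb π β) (γ b * ι a) =
      α (hh.grp * a) * β b :=
  hh.conv_apply_γ_mul_ι_of_right_left (α := α ∘ₗ LinearMap.mulLeft k hh.grp)
    (hh.PiDual_splitting_apply_γ_mul_ι α) (hh.piDual_apply_γ_mul_ι β) b a

theorem conv_PiDual_comm_piDual (hh : IsCoalgCleaving ι π γ γ') (α : Module.Dual k A)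
    (β : Module.Dual k Hb) :
    conv k (PiDual k A H hh.splitting α) (piDual k H Hb π β) =
      conv k (piDual k H Hb π β) (PiDual k A H hh.splitting α) :=
  hh.ext_γ_mul_ι fun b a => by
    rw [hh.conv_PiDual_piDual_apply, hh.conv_piDual_PiDual_apply, mul_comm]

theorem conv_piDual_PiDual_apply_mul_ι (hh : IsCoalgCleaving ι π γ γ') (β : Module.Dual k Hb)
    (α : Module.Dual k A) (h : H) (a : A) :
    conv k (piDual k H Hb π β) (PiDual k A H hh.splitting α) (h * ι a) =
      conv k (piDual k H Hb π β)
        (PiDual k A H hh.splitting (α ∘ₗ LinearMap.mulRight k a)) h := by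
  have key : conv k (piDual k H Hb π β) (PiDual k A H hh.splitting α) ∘ₗ
      LinearMap.mulRight k (ι a) =
      conv k (piDual k H Hb π β) (PiDual k A H hh.splitting (α ∘ₗ LinearMap.mulRight k a)) :=
    hh.ext_γ_mul_ι fun b a' => by
      rw [LinearMap.comp_apply, LinearMap.mulRight_apply, mul_assoc,
        ← hh.commByFinite.ι_mul, hh.conv_piDual_PiDual_apply, hh.conv_piDual_PiDual_apply]
      simp [mul_assoc]
  exact LinearMap.congr_fun key h

theorem exists_eq_sum_conv_piDual_PiDual (hh : IsCoalgCleaving ι π γ γ') {f : Module.Dual k H}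
    (hf : f ∈ finDual k H) :
    ∃ (n : ℕ) (β : Fin n → Module.Dual k Hb) (α : Fin n → Module.Dual k A),
      (∀ i, α i ∈ finDual k A) ∧
      f = ∑ i, conv k (piDual k H Hb π (β i)) (PiDual k A H hh.splitting (α i)) := by
  have := hh.quotient.findim
  let B := Module.finBasis k Hb
  refine ⟨_, fun j => B.coord j,
    fun j => f ∘ₗ LinearMap.mulLeft k (γ (B j) * γ' 1) ∘ₗ
      hh.commByFinite.algHom.toLinearMap,
    fun j => comp_algHom_mem_finDual (comp_mulLeft_mem_finDual hf _) _,
    hh.ext_γ_mul_ι fun b a => ?_⟩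
  have hterm : ∀ j, (f ∘ₗ LinearMap.mulLeft k (γ (B j) * γ' 1) ∘ₗ
      hh.commByFinite.algHom.toLinearMap) (hh.grp * a) = f (γ (B j) * ι a) := fun j => by
    simp only [LinearMap.comp_apply, CommByFinite.toLinearMap_algHom, LinearMap.mulLeft_apply,
      mul_assoc, hh.γ'_one_mul_ι_grp_mul]
  simp only [LinearMap.sum_apply, hh.conv_piDual_PiDual_apply, hterm, Module.Basis.coord_apply]
  rw [map_mul_eq_sum_basis γ B b (ι a), map_sum]
  simp only [map_smul, smul_eq_mul]

theorem eq_zero_of_sum_conv_piDual_PiDual_eq_zero (hh : IsCoalgCleaving ι π γ γ') {n : ℕ}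
    {β : Fin n → Module.Dual k Hb} {α : Fin n → Module.Dual k A}
    (hα : LinearIndependent k α)
    (h0 : ∑ i, conv k (piDual k H Hb π (β i)) (PiDual k A H hh.splitting (α i)) = 0)
    (i : Fin n) :
    β i = 0 := by
  ext b
  have hsum : ∑ j, β j b • α j = 0 := by
    ext w
    have hw := congr($h0 (γ b * ι (HopfAlgebra.antipode k hh.grp * w)))
    simpa [hh.conv_piDual_PiDual_apply, ← mul_assoc,
      hh.isGroupLikeElem_grp.mul_antipode_cancel] using hw
  exact Fintype.linearIndependent_iff.mp hα _ hsum i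

theorem iInf_comap_le_adCore (hh : IsCoalgCleaving ι π γ γ') {J : Type} [Fintype J]
    (B : Module.Basis J k Hb) (I : Submodule k A) :
    ⨅ j, I.comap (hh.splitting ∘ₗ adrBilin k (γ (B j)) ∘ₗ ι) ≤ adCore ι I := by
  intro x hx
  have hbasis : ∀ j, adr k H (γ (B j)) (ι x) ∈ I.map ι := fun j => by
    obtain ⟨y, hy⟩ := hh.commByFinite.normal_right (γ (B j)) x
    refine ⟨y, ?_, hy⟩
    simpa [← hy, adrBilin_apply, hh.splitting_ι] using Submodule.mem_iInf _ |>.mp hx j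
  -- on `ι(A)`, `ad (ι a * γ b)` is `ε(a) • ad (γ b)`, a combination of the `ad (γ (B j))`
  have hle : Submodule.span k {z | ∃ a b, z = ι a * γ b} ≤
      (I.map ι).comap ((adrBilin k).flip (ι x)) := by
    rw [Submodule.span_le]
    rintro _ ⟨a, b, rfl⟩
    have hb : adr k H (γ b) (ι x) = ∑ j, B.repr b j • adr k H (γ (B j)) (ι x) := by
      conv_lhs => rw [← B.sum_repr b]
      simp only [map_sum, map_smul, ← adrBilin_apply, LinearMap.sum_apply, LinearMap.smul_apply]
    rw [SetLike.mem_coe, Submodule.mem_comap, LinearMap.flip_apply, adrBilin_apply, adr_mul,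
      hh.commByFinite.adr_ι_ι, ← adrBilin_apply, map_smul, adrBilin_apply, hb]
    exact Submodule.smul_mem _ _ (Submodule.sum_mem _ fun j _ => Submodule.smul_mem _ _ (hbasis j))
  rw [hh.span_ι_mul_γ] at hle
  exact mem_adCore.mpr fun h => hle Submodule.mem_top

theorem finiteDimensional_quotient_adCore (hh : IsCoalgCleaving ι π γ γ') (I : Submodule k A)
    [FiniteDimensional k (A ⧸ I)] : FiniteDimensional k (A ⧸ adCore ι I) := by
  have := hh.quotient.findim
  let B := Module.finBasis k Hb
  have := finiteDimensional_quotient_iInf_comap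
    (fun j => hh.splitting ∘ₗ adrBilin k (γ (B j)) ∘ₗ ι) I
  exact Module.Finite.of_surjective _ (Submodule.factor_surjective (hh.iInf_comap_le_adCore B I))

theorem PiDual_splitting_mem_finDual (hh : IsCoalgCleaving ι π γ γ') {α : Module.Dual k A}
    (hα : α ∈ finDual k A) : PiDual k A H hh.splitting α ∈ finDual k H := by
  obtain ⟨I, hI, hIα, hIfd⟩ := hα
  have hK := hh.finiteDimensional_quotient_adCore I
  have hstable := fun x (hx : x ∈ adCore ι I) => hh.commByFinite.exists_adr_eq_of_mem_adCore hx
  refine ⟨leftIdealOf ι (adCore ι I),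
    fun y z hz => ⟨mul_mem_leftIdealOf y hz, mem_leftIdealOf_mul hstable y hz⟩,
    Submodule.span_le.mpr ?_, ?_⟩
  · rintro _ ⟨h, x, hx, rfl⟩
    simp only [SetLike.mem_coe, LinearMap.mem_ker, PiDual, LinearMap.comp_apply,
      hh.splitting_mul_ι]
    exact hIα (hI _ x (hh.commByFinite.adCore_le I hx)).1
  · have := hh.quotient.findim
    let B := Module.finBasis k Hb
    refine finiteDimensional_of_iSup_range_eq_top
      (fun j => (leftIdealOf ι (adCore ι I)).mkQ ∘ₗ LinearMap.mulLeft k (γ (B j)) ∘ₗ ι)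
      (adCore ι I) (fun j x hx => ?_) ?_
    · simpa [Submodule.Quotient.mk_eq_zero] using mul_ι_mem_leftIdealOf (γ (B j)) hx
    · simp_rw [LinearMap.range_comp _ (Submodule.mkQ _)]
      rw [← Submodule.map_iSup, hh.iSup_range_mulLeft_γ_comp_ι B, Submodule.map_top,
        Submodule.range_mkQ]

end IsCoalgCleaving

end Cleaving

end Paper

open Paper in
theorem statement_5_general
    (k : Type) [Field k]
    (A : Type) [CommRing A] [HopfAlgebra k A]
    (H : Type) [Ring H] [HopfAlgebra k H]
    (Hb : Type) [Ring Hb] [HopfAlgebra k Hb]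
    (ι : A →ₗ[k] H) (π : H →ₗ[k] Hb)
    (hCbF : CommByFinite k A H ι)
    (hQ : IsHbarQuotient k A H Hb ι π)
    -- `γ` is a cleaving map which is a coalgebra map:
    (γ : Hb →ₗ[k] H)
    (hγ_comul : ∀ b : Hb,
      Coalgebra.comul (R := k) (γ b) = TensorProduct.map γ γ (Coalgebra.comul b))
    (hγ_counit : ∀ b : Hb,
      Coalgebra.counit (R := k) (γ b) = Coalgebra.counit (R := k) b)
    -- `γ` is a right `H̄`-comodule map
    (hγ_comod : ∀ b : Hb,
      TensorProduct.map (LinearMap.id (M := H)) π (Coalgebra.comul (R := k) (γ b))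
        = TensorProduct.map γ (LinearMap.id (M := Hb)) (Coalgebra.comul b))
    -- `γ` is convolution invertible
    (hγ_inv : ∃ γ' : Hb →ₗ[k] H, ∀ (b : Hb) (n : ℕ) (l r : Fin n → Hb),
      Coalgebra.comul (R := k) b = ∑ i, l i ⊗ₜ[k] r i →
      (∑ i, γ (l i) * γ' (r i)) = Coalgebra.counit (R := k) b • (1 : H) ∧
      (∑ i, γ' (l i) * γ (r i)) = Coalgebra.counit (R := k) b • (1 : H))
    -- `H = A #_σ H̄` as an algebra: `H = A·γ(H̄)`, i.e. `(a, b) ↦ ι(a)γ(b)`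
    -- spans `H` freely
    (hcross : ∀ h : H, ∃ (n : ℕ) (a : Fin n → A) (b : Fin n → Hb),
      LinearIndependent k b ∧ h = ∑ i, ι (a i) * γ (b i)) :
    -- conclusion: for a suitable splitting `Π` (with `X = ker Π = A·γ(ker ε)`),
    ∃ p : H →ₗ[k] A, IsSplitting k A H ι p ∧
      -- (CoSplit) holds
      CoSplit k A H p ∧
      -- `Π°` is an algebra map `A° → H°`
      (∀ α β : Module.Dual k A,
        PiDual k A H p (conv k α β)
          = conv k (PiDual k A H p α) (PiDual k A H p β)) ∧
      PiDual k A H p (convOne k) = convOne k ∧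
      (∀ α ∈ finDual k A, PiDual k A H p α ∈ finDual k H) ∧
      -- the action of `A°` on `H̄*` is trivial: `Π°(A°)` and `π°(H̄*)` commute
      (∀ α ∈ finDual k A, ∀ β : Module.Dual k Hb,
        conv k (PiDual k A H p α) (piDual k H Hb π β)
          = conv k (piDual k H Hb π β) (PiDual k A H p α)) ∧
      -- `H° ≅ H̄* ⊗ A°` via `(β, α) ↦ π°(β) * Π°(α)`: surjectivity ...
      (∀ f ∈ finDual k H, ∃ (n : ℕ) (β : Fin n → Module.Dual k Hb)
          (α : Fin n → Module.Dual k A),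
        (∀ i, α i ∈ finDual k A) ∧
        f = ∑ i, conv k (piDual k H Hb π (β i)) (PiDual k A H p (α i))) ∧
      -- ... injectivity ...
      (∀ (n : ℕ) (β : Fin n → Module.Dual k Hb) (α : Fin n → Module.Dual k A),
        (∀ i, α i ∈ finDual k A) → LinearIndependent k α →
        (∑ i, conv k (piDual k H Hb π (β i)) (PiDual k A H p (α i))) = 0 →
        ∀ i, β i = 0) ∧
      -- ... left `H̄*`-linearity ...
      (∀ (β' β : Module.Dual k Hb) (α : Module.Dual k A),
        conv k (piDual k H Hb π (conv k β' β)) (PiDual k A H p α)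
          = conv k (piDual k H Hb π β')
              (conv k (piDual k H Hb π β) (PiDual k A H p α))) ∧
      -- ... and right `A°`-colinearity (pairing form)
      (∀ (β : Module.Dual k Hb) (α : Module.Dual k A) (h : H) (a : A),
        conv k (piDual k H Hb π β) (PiDual k A H p α) (h * ι a)
          = conv k (piDual k H Hb π β)
              (PiDual k A H p (α ∘ₗ LinearMap.mulRight k a)) h) := by
  obtain ⟨γ', hγ'⟩ := hγ_inv
  have hspan : Submodule.span k {x | ∃ a b, x = ι a * γ b} = ⊤ := by
    refine eq_top_iff.mpr fun h _ => ?_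
    obtain ⟨n, a, b, -, rfl⟩ := hcross h
    exact Submodule.sum_mem _ fun i _ => Submodule.subset_span ⟨a i, b i, rfl⟩
  have hh : IsCoalgCleaving ι π γ γ' := ⟨hCbF, hQ, hγ_comul, hγ_counit, hγ_comod,
    convMul_eq_one_of_sum_fin γ γ' fun b n l r h => (hγ' b n l r h).1,
    convMul_eq_one_of_sum_fin γ' γ fun b n l r h => (hγ' b n l r h).2, hspan⟩
  exact ⟨hh.splitting, ⟨hh.splitting_ι, hh.splitting_mul_ι⟩, hh.isCoideal_ker_splitting,
    hh.PiDual_splitting_conv, hh.counit_comp_splitting, fun α => hh.PiDual_splitting_mem_finDual,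
    fun α _ β => hh.conv_PiDual_comm_piDual α β, fun f => hh.exists_eq_sum_conv_piDual_PiDual,
    fun n β α _ hα h0 => hh.eq_zero_of_sum_conv_piDual_PiDual_eq_zero hα h0,
    fun β' β α => by rw [hQ.piDual_conv, conv_assoc], hh.conv_piDual_PiDual_apply_mul_ι⟩

open Paper in
/-- If `H = A #_σ H̄` is a crossed product whose cleaving map
`γ : H̄ → H` is a coalgebra map, then (CoSplit) holds, the induced action of
`A°` on `H̄*` is trivial, and `H° ≅ H̄* ⊗ A°` as algebras, left `H̄*`-modules,
and right `A°`-comodules. -/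
theorem statement_5
    (k : Type) [Field k] [IsAlgClosed k]
    (A : Type) [CommRing A] [HopfAlgebra k A]
    (H : Type) [Ring H] [HopfAlgebra k H]
    (Hb : Type) [Ring Hb] [HopfAlgebra k Hb]
    (ι : A →ₗ[k] H) (π : H →ₗ[k] Hb)
    (hCbF : CommByFinite k A H ι)
    (hQ : IsHbarQuotient k A H Hb ι π)
    (hyp : StandingHyp k A H ι)
    -- `γ` is a cleaving map which is a coalgebra map:
    (γ : Hb →ₗ[k] H)
    (hγ_comul : ∀ b : Hb,
      Coalgebra.comul (R := k) (γ b) = TensorProduct.map γ γ (Coalgebra.comul b))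
    (hγ_counit : ∀ b : Hb,
      Coalgebra.counit (R := k) (γ b) = Coalgebra.counit (R := k) b)
    -- `γ` is a right `H̄`-comodule map
    (hγ_comod : ∀ b : Hb,
      TensorProduct.map (LinearMap.id (M := H)) π (Coalgebra.comul (R := k) (γ b))
        = TensorProduct.map γ (LinearMap.id (M := Hb)) (Coalgebra.comul b))
    -- `γ` is convolution invertible
    (hγ_inv : ∃ γ' : Hb →ₗ[k] H, ∀ (b : Hb) (n : ℕ) (l r : Fin n → Hb),
      Coalgebra.comul (R := k) b = ∑ i, l i ⊗ₜ[k] r i →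
      (∑ i, γ (l i) * γ' (r i)) = Coalgebra.counit (R := k) b • (1 : H) ∧
      (∑ i, γ' (l i) * γ (r i)) = Coalgebra.counit (R := k) b • (1 : H))
    -- `H = A #_σ H̄` as an algebra: `H = A·γ(H̄)`, i.e. `(a, b) ↦ ι(a)γ(b)`
    -- spans `H` freely
    (hcross : ∀ h : H, ∃ (n : ℕ) (a : Fin n → A) (b : Fin n → Hb),
      LinearIndependent k b ∧ h = ∑ i, ι (a i) * γ (b i)) :
    -- conclusion: for a suitable splitting `Π` (with `X = ker Π = A·γ(ker ε)`),
    ∃ p : H →ₗ[k] A, IsSplitting k A H ι p ∧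
      -- (CoSplit) holds
      CoSplit k A H p ∧
      -- `Π°` is an algebra map `A° → H°`
      (∀ α β : Module.Dual k A,
        PiDual k A H p (conv k α β)
          = conv k (PiDual k A H p α) (PiDual k A H p β)) ∧
      PiDual k A H p (convOne k) = convOne k ∧
      (∀ α ∈ finDual k A, PiDual k A H p α ∈ finDual k H) ∧
      -- the action of `A°` on `H̄*` is trivial: `Π°(A°)` and `π°(H̄*)` commute
      (∀ α ∈ finDual k A, ∀ β : Module.Dual k Hb,
        conv k (PiDual k A H p α) (piDual k H Hb π β)
          = conv k (piDual k H Hb π β) (PiDual k A H p α)) ∧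
      -- `H° ≅ H̄* ⊗ A°` via `(β, α) ↦ π°(β) * Π°(α)`: surjectivity ...
      (∀ f ∈ finDual k H, ∃ (n : ℕ) (β : Fin n → Module.Dual k Hb)
          (α : Fin n → Module.Dual k A),
        (∀ i, α i ∈ finDual k A) ∧
        f = ∑ i, conv k (piDual k H Hb π (β i)) (PiDual k A H p (α i))) ∧
      -- ... injectivity ...
      (∀ (n : ℕ) (β : Fin n → Module.Dual k Hb) (α : Fin n → Module.Dual k A),
        (∀ i, α i ∈ finDual k A) → LinearIndependent k α →
        (∑ i, conv k (piDual k H Hb π (β i)) (PiDual k A H p (α i))) = 0 →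
        ∀ i, β i = 0) ∧
      -- ... left `H̄*`-linearity ...
      (∀ (β' β : Module.Dual k Hb) (α : Module.Dual k A),
        conv k (piDual k H Hb π (conv k β' β)) (PiDual k A H p α)
          = conv k (piDual k H Hb π β')
              (conv k (piDual k H Hb π β) (PiDual k A H p α))) ∧
      -- ... and right `A°`-colinearity (pairing form)
      (∀ (β : Module.Dual k Hb) (α : Module.Dual k A) (h : H) (a : A),
        conv k (piDual k H Hb π β) (PiDual k A H p α) (h * ι a)
          = conv k (piDual k H Hb π β)
              (PiDual k A H p (α ∘ₗ LinearMap.mulRight k a)) h) :=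
  statement_5_general k A H Hb ι π hCbF hQ γ hγ_comul hγ_counit hγ_comod hγ_inv hcross
end
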